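/- Let X^n be a random vector on {0,1}^n and let S ⊆ {1,...,n} be a random subset, independent of X^n, that includes each index independently with probability t. Then E_S[H(X_S)] ≥ t·H(X^n), where X_S denotes the restriction of X^n to the coordinates in S. -/

import Mathlib

open Finset

/-- Shannon entropy (in bits) of a pmf on a finite type (convention `0·log 0 = 0`
holds since `Real.logb 2 0 = 0`). -/
noncomputable def H2 {α : Type*} [Fintype α] (p : α → ℝ) : ℝ :=
  -∑ x, p x * Real.logb 2 (p x)

/-- `p` is a probability mass function. -/
def IsPMF {α : Type*} [Fintype α] (p : α → ℝ) : Prop :=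
  (∀ x, 0 ≤ p x) ∧ ∑ x, p x = 1

/-- Left marginal of a joint pmf. -/
noncomputable def margL {α β : Type*} [Fintype α] [Fintype β] (p : α × β → ℝ) : α → ℝ :=
  fun a => ∑ b, p (a, b)

/-- Right marginal of a joint pmf. -/
noncomputable def margR {α β : Type*} [Fintype α] [Fintype β] (p : α × β → ℝ) : β → ℝ :=
  fun b => ∑ a, p (a, b)

/-- Mutual information (in bits) of a joint pmf: `I = H(X) + H(Y) - H(X,Y)`. -/
noncomputable def MI {α β : Type*} [Fintype α] [Fintype β] (p : α × β → ℝ) : ℝ :=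
  H2 (margL p) + H2 (margR p) - H2 p

/-- The pmf of the restriction `X_S` of `Xⁿ` to the coordinates in `s`
(unobserved coordinates are replaced by the erasure symbol `none`). -/
noncomputable def maskPMF (n : ℕ) (p : (Fin n → Bool) → ℝ) (s : Finset (Fin n)) :
    (Fin n → Option Bool) → ℝ :=
  fun y => ∑ x, if (fun i => if i ∈ s then some (x i) else none) = y then p x else 0

/-!
The map `s ↦ H(X_s)` is submodular: `H(X_{a∪b}) + H(X_{a∩b}) ≤ H(X_a) + H(X_b)` is the
nonnegativity of the conditional mutual information `I(X_a ; X_b | X_{a∩b})`, i.e. Gibbs'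
inequality. Hence `H(X_s) ≥ ∑_{i∈s} H(X_i | X_{<i})`: in the chain rule for `H(X_s)` the `i`-th
term conditions only on `X_{s ∩ [<i]}`, and conditioning on more can only lower entropy.
Averaging over `S`, which contains each `i` with probability `t`, gives
`t ∑_i H(X_i | X_{<i}) = t H(Xⁿ)`.
-/

section Pushforward

variable {Ω α β : Type*} [Fintype Ω] [DecidableEq α] [DecidableEq β]

noncomputable def pushforward (f : Ω → α) (p : Ω → ℝ) : α → ℝ :=
  fun a => ∑ x, if f x = a then p x else 0

theorem sum_pushforward_mul [Fintype α] (f : Ω → α) (p : Ω → ℝ) (F : α → ℝ) :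
    ∑ a, pushforward f p a * F a = ∑ x, p x * F (f x) := by
  simp only [pushforward, sum_mul, ite_mul, zero_mul]
  rw [sum_comm]
  exact sum_congr rfl fun x _ => by rw [sum_ite_eq, if_pos (mem_univ _)]

theorem sum_pushforward [Fintype α] (f : Ω → α) (p : Ω → ℝ) :
    ∑ a, pushforward f p a = ∑ x, p x := by
  simpa using sum_pushforward_mul f p 1

theorem pushforward_id (p : Ω → ℝ) [DecidableEq Ω] : pushforward id p = p := by
  funext y
  simp [pushforward]

theorem pushforward_pushforward [Fintype α] (f : Ω → α) (g : α → β) (p : Ω → ℝ) :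
    pushforward g (pushforward f p) = pushforward (g ∘ f) p := by
  funext b
  simpa [pushforward] using sum_pushforward_mul f p (fun a => if g a = b then 1 else 0)

theorem le_pushforward_apply {p : Ω → ℝ} (hp : ∀ x, 0 ≤ p x) (f : Ω → α) (x : Ω) :
    p x ≤ pushforward f p (f x) := by
  simpa [pushforward] using single_le_sum (f := fun v => if f v = f x then p v else 0)
    (fun v _ => by split_ifs <;> simp [hp v]) (mem_univ x)

theorem pushforward_nonneg {p : Ω → ℝ} (hp : ∀ x, 0 ≤ p x) (f : Ω → α) (a : α) :
    0 ≤ pushforward f p a :=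
  sum_nonneg fun x _ => by split_ifs <;> simp [hp x]

theorem H2_pushforward [Fintype α] (f : Ω → α) (p : Ω → ℝ) :
    H2 (pushforward f p) = -∑ x, p x * Real.logb 2 (pushforward f p (f x)) := by
  rw [H2, sum_pushforward_mul f p (fun a => Real.logb 2 (pushforward f p a))]

theorem pushforward_apply_congr {p : Ω → ℝ} {f : Ω → α} {g : Ω → β} (hfg : ∀ x y, f x = f y ↔ g x = g y)
    (x : Ω) : pushforward f p (f x) = pushforward g p (g x) :=
  sum_congr rfl fun y _ => by simp only [hfg]

theorem H2_pushforward_congr [Fintype α] [Fintype β] {p : Ω → ℝ} {f : Ω → α} {g : Ω → β}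
    (hfg : ∀ x y, f x = f y ↔ g x = g y) : H2 (pushforward f p) = H2 (pushforward g p) := by
  simp only [H2_pushforward, pushforward_apply_congr hfg]

theorem H2_pushforward_eq_zero [Fintype α] {p : Ω → ℝ} (hp : ∑ x, p x = 1) {f : Ω → α}
    (hf : ∀ x y, f x = f y) : H2 (pushforward f p) = 0 := by
  have hmass : ∀ x, pushforward f p (f x) = 1 := fun x => by
    rw [← hp]
    exact sum_congr rfl fun y _ => if_pos (hf y x)
  simp [H2_pushforward, hmass]

end Pushforward

section Submodularity

variable {Ω α β γ : Type*} [Fintype Ω] [Fintype α] [Fintype β]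
  [DecidableEq α] [DecidableEq β] [DecidableEq γ] {p : Ω → ℝ}

theorem sum_mul_logb_nonpos (hp : IsPMF p) {r : Ω → ℝ} (hr : ∀ x, p x ≠ 0 → 0 < r x)
    (hpr : ∑ x, p x * r x ≤ 1) : ∑ x, p x * Real.logb 2 (r x) ≤ 0 := by
  have hterm : ∀ x, p x * Real.logb 2 (r x) ≤ (p x * r x - p x) / Real.log 2 := fun x => by
    rcases eq_or_ne (p x) 0 with h0 | h0
    · simp [h0]
    rw [Real.logb, ← mul_div_assoc, ← mul_sub_one]
    gcongr
    · exact lt_of_le_of_ne (hp.1 x) h0.symm |>.le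
    · exact Real.log_le_sub_one_of_pos (hr x h0)
  calc ∑ x, p x * Real.logb 2 (r x) ≤ ∑ x, (p x * r x - p x) / Real.log 2 :=
        sum_le_sum fun x _ => hterm x
    _ = (∑ x, p x * r x - 1) / Real.log 2 := by
        rw [← sum_div, sum_sub_distrib, hp.2]
    _ ≤ 0 := div_nonpos_of_nonpos_of_nonneg (by linarith) (Real.log_nonneg one_le_two)

/-- The ratio inside is `2 ^ (-i x)` for the pointwise conditional mutual information `i x`
of `fa` and `fb` given `ga ∘ fa`. -/
theorem sum_mul_pushforward_ratio_le_one (hp : IsPMF p) (fa : Ω → α) (fb : Ω → β)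
    (ga : α → γ) (gb : β → γ) (hg : ∀ x, ga (fa x) = gb (fb x)) :
    ∑ x, p x * (pushforward fa p (fa x) * pushforward fb p (fb x) /
      (pushforward (fun x => (fa x, fb x)) p (fa x, fb x) *
        pushforward (ga ∘ fa) p (ga (fa x)))) ≤ 1 := by
  set q := pushforward (fun x => (fa x, fb x)) p
  set pa := pushforward fa p
  set pb := pushforward fb p
  set pc := pushforward (ga ∘ fa) p
  have hpa : ∀ a, 0 ≤ pa a := pushforward_nonneg hp.1 fa
  have hpb : ∀ b, 0 ≤ pb b := pushforward_nonneg hp.1 fb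
  have hpc0 : ∀ c, 0 ≤ pc c := pushforward_nonneg hp.1 _
  have hpc : pushforward gb pb = pc := by
    rw [pushforward_pushforward]
    exact congrArg (pushforward · p) (funext fun x => (hg x).symm)
  have hsupp : ∀ ab : α × β, q ab ≠ 0 → ga ab.1 = gb ab.2 := fun ab hq => by
    obtain ⟨x, hx⟩ := exists_ne_zero_of_sum_ne_zero hq
    have hfx : (fa x, fb x) = ab := by by_contra h; simp [h] at hx
    rw [← hfx]
    exact hg x
  calc _ = ∑ ab : α × β, q ab * (pa ab.1 * pb ab.2 / (q ab * pc (ga ab.1))) :=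
        (sum_pushforward_mul _ p _).symm
    _ ≤ ∑ ab : α × β, pa ab.1 / pc (ga ab.1) * (if gb ab.2 = ga ab.1 then pb ab.2 else 0) := by
        refine sum_le_sum fun ab _ => ?_
        rcases eq_or_ne (q ab) 0 with hq | hq
        · rw [hq, zero_mul]
          split_ifs
          exacts [mul_nonneg (div_nonneg (hpa _) (hpc0 _)) (hpb _), le_of_eq (mul_zero _).symm]
        rw [if_pos (hsupp ab hq).symm, ← mul_div_assoc, mul_div_mul_left _ _ hq,
          div_mul_eq_mul_div]
    _ = ∑ a, pa a / pc (ga a) * pushforward gb pb (ga a) := by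
        rw [Fintype.sum_prod_type]
        exact sum_congr rfl fun a _ => by
          dsimp only
          exact (mul_sum _ _ _).symm
    _ ≤ ∑ a, pa a := by
        rw [hpc]
        refine sum_le_sum fun a _ => ?_
        rw [div_mul_eq_mul_div, mul_div_assoc]
        exact mul_le_of_le_one_right (hpa a) (div_self_le_one _)
    _ = 1 := by rw [sum_pushforward, hp.2]

theorem H2_pushforward_prod_add_le_add [Fintype γ] (hp : IsPMF p) (fa : Ω → α) (fb : Ω → β)
    (ga : α → γ) (gb : β → γ) (hg : ∀ x, ga (fa x) = gb (fb x)) :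
    H2 (pushforward (fun x => (fa x, fb x)) p) + H2 (pushforward (ga ∘ fa) p) ≤
      H2 (pushforward fa p) + H2 (pushforward fb p) := by
  set A := fun x => pushforward fa p (fa x)
  set B := fun x => pushforward fb p (fb x)
  set AB := fun x => pushforward (fun x => (fa x, fb x)) p (fa x, fb x)
  set C := fun x => pushforward (ga ∘ fa) p ((ga ∘ fa) x)
  have hpos : ∀ x, p x ≠ 0 → 0 < A x ∧ 0 < B x ∧ 0 < AB x ∧ 0 < C x := fun x hx => by
    have h := lt_of_le_of_ne (hp.1 x) (Ne.symm hx)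
    exact ⟨h.trans_le (le_pushforward_apply hp.1 _ x), h.trans_le (le_pushforward_apply hp.1 _ x),
      h.trans_le (le_pushforward_apply hp.1 _ x), h.trans_le (le_pushforward_apply hp.1 _ x)⟩
  have hgibbs := sum_mul_logb_nonpos hp (r := fun x => A x * B x / (AB x * C x))
    (fun x hx => by obtain ⟨ha, hb, hab, hc⟩ := hpos x hx; positivity)
    (sum_mul_pushforward_ratio_le_one hp fa fb ga gb hg)
  have hsplit : ∀ x, p x * Real.logb 2 (A x * B x / (AB x * C x)) =
      p x * Real.logb 2 (A x) + p x * Real.logb 2 (B x) - p x * Real.logb 2 (AB x)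
        - p x * Real.logb 2 (C x) := fun x => by
    rcases eq_or_ne (p x) 0 with h0 | h0
    · simp [h0]
    obtain ⟨ha, hb, hab, hc⟩ := hpos x h0
    rw [Real.logb_div (by positivity) (by positivity), Real.logb_mul ha.ne' hb.ne',
      Real.logb_mul hab.ne' hc.ne']
    ring
  simp only [hsplit, sum_sub_distrib, sum_add_distrib] at hgibbs
  rw [H2_pushforward, H2_pushforward, H2_pushforward, H2_pushforward]
  linarith

end Submodularity

section Mask

variable {ι β : Type*} [DecidableEq ι]

def mask (s : Finset ι) (x : ι → β) : ι → Option β :=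
  fun i => if i ∈ s then some (x i) else none

theorem mask_eq_mask_iff {s : Finset ι} {x y : ι → β} :
    mask s x = mask s y ↔ ∀ i ∈ s, x i = y i := by
  simp only [funext_iff, mask]
  refine forall_congr' fun i => ?_
  by_cases hi : i ∈ s <;> simp [hi]

theorem maskPMF_eq_pushforward {n : ℕ} (p : (Fin n → Bool) → ℝ) (s : Finset (Fin n)) :
    maskPMF n p s = pushforward (mask s) p := rfl

end Mask

section MaskEntropy

variable {n : ℕ} {p : (Fin n → Bool) → ℝ}

theorem H2_maskPMF_univ : H2 (maskPMF n p univ) = H2 p := by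
  rw [maskPMF_eq_pushforward, H2_pushforward_congr (g := id), pushforward_id]
  intro x y
  rw [mask_eq_mask_iff, id, id, funext_iff]
  simp only [mem_univ, forall_const]

theorem H2_maskPMF_empty (hp : ∑ x, p x = 1) : H2 (maskPMF n p ∅) = 0 :=
  H2_pushforward_eq_zero hp fun _ _ => mask_eq_mask_iff.2 fun _ hi => absurd hi (notMem_empty _)

theorem H2_maskPMF_union_add_inter_le (hp : IsPMF p) (a b : Finset (Fin n)) :
    H2 (maskPMF n p (a ∪ b)) + H2 (maskPMF n p (a ∩ b)) ≤
      H2 (maskPMF n p a) + H2 (maskPMF n p b) := by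
  let restrictTo (c : Finset (Fin n)) (y : Fin n → Option Bool) : Fin n → Option Bool :=
    fun i => if i ∈ c then y i else none
  have hrestrict : ∀ a b x, restrictTo b (mask a x) = mask (a ∩ b) x := fun a b x => by
    funext i
    by_cases ha : i ∈ a <;> by_cases hb : i ∈ b <;> simp [restrictTo, mask, ha, hb]
  have h := H2_pushforward_prod_add_le_add hp (mask a) (mask b) (restrictTo b) (restrictTo a)
    fun x => by rw [hrestrict, hrestrict, inter_comm]
  have hunion : H2 (pushforward (fun x => (mask a x, mask b x)) p) = H2 (maskPMF n p (a ∪ b)) :=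
    H2_pushforward_congr (g := mask (a ∪ b)) fun x y => by
      rw [Prod.mk.injEq, mask_eq_mask_iff, mask_eq_mask_iff, mask_eq_mask_iff]
      simp only [mem_union, or_imp, forall_and]
  rwa [hunion, Function.comp_def, funext (hrestrict a b)] at h

end MaskEntropy

section SetFunction

variable {ι : Type*} [LinearOrder ι] [LocallyFiniteOrderBot ι] (f : Finset ι → ℝ)

theorem sum_sub_inter_Iic_Iio (s : Finset ι) :
    ∑ i ∈ s, (f (s ∩ Iic i) - f (s ∩ Iio i)) = f s - f ∅ := by
  induction s using Finset.induction_on_max with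
  | empty => simp
  | insert a s ha ih =>
    have ha' : a ∉ s := fun h => lt_irrefl a (ha a h)
    have hIic : insert a s ∩ Iic a = insert a s := inter_eq_left.2 fun x hx => by
      rcases mem_insert.1 hx with rfl | hx
      exacts [mem_Iic.2 le_rfl, mem_Iic.2 (ha x hx).le]
    have hIio : insert a s ∩ Iio a = s := by
      ext x
      simp only [mem_inter, mem_insert, mem_Iio]
      constructor
      · rintro ⟨rfl | hx, hlt⟩
        exacts [absurd hlt (lt_irrefl _), hx]
      · exact fun hx => ⟨Or.inr hx, ha x hx⟩
    have hlower : ∀ i ∈ s, ∀ t : Finset ι, t ⊆ Iic i → insert a s ∩ t = s ∩ t := by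
      intro i hi t ht
      rw [insert_inter_of_notMem fun h => (ha i hi).not_ge (mem_Iic.1 (ht h))]
    have hs : ∀ i ∈ s, f (insert a s ∩ Iic i) - f (insert a s ∩ Iio i) =
        f (s ∩ Iic i) - f (s ∩ Iio i) := fun i hi => by
      rw [hlower i hi _ subset_rfl, hlower i hi _ Iio_subset_Iic_self]
    rw [sum_insert ha', hIic, hIio, sum_congr rfl hs, ih]
    ring

theorem sum_sub_Iic_Iio_le_of_submodular
    (hf : ∀ a b, f (a ∪ b) + f (a ∩ b) ≤ f a + f b) (s : Finset ι) :
    ∑ i ∈ s, (f (Iic i) - f (Iio i)) ≤ f s - f ∅ := by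
  rw [← sum_sub_inter_Iic_Iio]
  refine sum_le_sum fun i hi => ?_
  have hunion : s ∩ Iic i ∪ Iio i = Iic i := by
    ext x
    simp only [mem_union, mem_inter, mem_Iic, mem_Iio]
    constructor
    · rintro (⟨_, h⟩ | h)
      exacts [h, h.le]
    · intro h
      rcases h.lt_or_eq with h | rfl
      exacts [Or.inr h, Or.inl ⟨hi, le_rfl⟩]
  have hinter : s ∩ Iic i ∩ Iio i = s ∩ Iio i := by
    rw [inter_assoc, inter_eq_right.2 Iio_subset_Iic_self]
  have := hf (s ∩ Iic i) (Iio i)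
  rw [hunion, hinter] at this
  linarith

end SetFunction

section BinomialWeights

variable {ι R : Type*} [Fintype ι] [DecidableEq ι] [CommRing R]

theorem sum_pow_mul_pow_of_mem (t : R) (i : ι) :
    ∑ s : Finset ι, (if i ∈ s then t ^ #s * (1 - t) ^ (Fintype.card ι - #s) else 0) = t := by
  -- Expand `∏ j, (t + g j)` with `g i = 0`: only the subsets containing `i` survive.
  have h := prod_add (fun _ => t) (fun j => if j = i then 0 else 1 - t) univ
  have hcompl : ∀ s : Finset ι, ∏ j ∈ univ \ s, (if j = i then 0 else 1 - t) =
      if i ∈ s then (1 - t) ^ (Fintype.card ι - #s) else 0 := fun s => by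
    split_ifs with hi
    · rw [prod_congr rfl fun j hj => if_neg fun hji => (mem_sdiff.1 hj).2 (hji ▸ hi),
        prod_const, card_univ_sdiff]
    · exact prod_eq_zero (mem_sdiff.2 ⟨mem_univ i, hi⟩) (if_pos rfl)
  simp only [add_ite, add_zero, add_sub_cancel, prod_ite_eq', mem_univ, if_true, prod_const,
    powerset_univ, hcompl, mul_ite, mul_zero] at h
  exact h.symm

theorem sum_pow_mul_pow_mul_sum (t : R) (c : ι → R) :
    ∑ s : Finset ι, t ^ #s * (1 - t) ^ (Fintype.card ι - #s) * ∑ i ∈ s, c i =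
      t * ∑ i, c i := by
  calc _ = ∑ s : Finset ι, ∑ i, (if i ∈ s then t ^ #s * (1 - t) ^ (Fintype.card ι - #s) else 0)
          * c i := by
        refine sum_congr rfl fun s _ => ?_
        rw [← univ_inter s, ← sum_ite_mem, mul_sum, univ_inter]
        exact sum_congr rfl fun i _ => by split_ifs <;> simp
    _ = t * ∑ i, c i := by
        rw [sum_comm, mul_sum]
        exact sum_congr rfl fun i _ => by rw [← sum_mul, sum_pow_mul_pow_of_mem]

end BinomialWeights

/-- Shearer's lemma for i.i.d. random subsets: if `S` includes each index independently
with probability `t`, then `E_S[H(X_S)] ≥ t·H(Xⁿ)`. -/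
theorem shearer_iid_subsets (n : ℕ) (p : (Fin n → Bool) → ℝ) (hp : IsPMF p)
    (t : ℝ) (ht0 : 0 ≤ t) (ht1 : t ≤ 1) :
    t * H2 p ≤ ∑ s : Finset (Fin n),
      (t ^ s.card * (1 - t) ^ (n - s.card)) * H2 (maskPMF n p s) := by
  set f := fun s => H2 (maskPMF n p s)
  have hempty : f ∅ = 0 := H2_maskPMF_empty hp.2
  have hchain : ∑ i, (f (Iic i) - f (Iio i)) = H2 p := by
    rw [← H2_maskPMF_univ, ← sub_zero (H2 _), ← hempty, ← sum_sub_inter_Iic_Iio f univ]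
    simp only [univ_inter]
  have hweights := sum_pow_mul_pow_mul_sum t fun i => f (Iic i) - f (Iio i)
  rw [Fintype.card_fin, hchain] at hweights
  rw [← hweights]
  gcongr with s
  simpa [hempty] using sum_sub_Iic_Iio_le_of_submodular f (H2_maskPMF_union_add_inter_le hp) s
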